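/- arXiv:0806.3650 — 7 statements merged into one kernel-verified Lean document; each statement's English description precedes it below -/
import Mathlib

section
/- Let f and g be q-linearized polynomials over F_{q^m} of q-degree at most k-1, with k ≤ ℓ, and let α_1,…,α_ℓ ∈ F_{q^m} be linearly independent over F_q. If f ≠ g, then the subspaces E(f) = span{(α_i, f(α_i)) : 1 ≤ i ≤ ℓ} and E(g) = span{(α_i, g(α_i)) : 1 ≤ i ≤ ℓ} of F_q^ℓ × F_{q^m} satisfy dim(E(f) ∩ E(g)) ≤ k - 1. -/
/-!
Both codewords lie in graphs of `F_q`-linear maps: `E(f) ⊆ {(x, f x)}`. Two graphs meet in the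
image of `ker (f - g)` under `x ↦ (x, f x)`, and `f - g` is the linearized polynomial with
coefficients `a - b`. When `a ≠ b` this polynomial is nonzero of degree at most `q ^ (k - 1)`, so
the `F_q`-subspace `ker (f - g)` has at most `q ^ (k - 1)` elements, i.e. dimension at most `k - 1`.
-/

/-- The Kötter–Kschischang codeword associated with the `q`-linearized polynomial with
coefficient vector `a`: the `F_q`-span of `{(α_i, f(α_i)) : 1 ≤ i ≤ ℓ}` where
`f(x) = Σ_j a_j x^{q^j}`. -/
noncomputable def KKword (K L : Type*) [Field K] [Fintype K] [Field L] [Algebra K L]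
    (k ℓ : ℕ) (α : Fin ℓ → L) (a : Fin k → L) : Submodule K (L × L) :=
  Submodule.span K (Set.range fun i : Fin ℓ =>
    ((α i, ∑ j : Fin k, a j * α i ^ (Fintype.card K) ^ (j : ℕ)) : L × L))

open Polynomial Module LinearMap

theorem LinearMap.graph_inf_graph {R M N : Type*} [Ring R] [AddCommGroup M] [AddCommGroup N]
    [Module R M] [Module R N] (f g : M →ₗ[R] N) :
    f.graph ⊓ g.graph = (ker (f - g)).map (LinearMap.id.prod f) := by
  ext ⟨x, y⟩
  simp only [Submodule.mem_inf, mem_graph_iff, Submodule.mem_map, mem_ker, sub_apply,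
    sub_eq_zero, prod_apply]
  constructor
  · rintro ⟨rfl, hg⟩
    exact ⟨x, hg, rfl⟩
  · rintro ⟨x, hx, h⟩
    cases h
    exact ⟨rfl, hx⟩

theorem Submodule.finite_of_forall_isRoot {K L : Type*} [Field K] [Field L] [Algebra K L]
    (V : Submodule K L) {P : L[X]} (hP : P ≠ 0) (hV : ∀ x ∈ V, P.IsRoot x) : Finite V :=
  (P.roots.finite_toSet.subset fun x hx => (mem_roots hP).mpr (hV x hx)).to_subtype

theorem Submodule.card_pow_finrank_le_natDegree {K L : Type*} [Field K] [Fintype K] [Field L]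
    [Algebra K L] (V : Submodule K L) {P : L[X]} (hP : P ≠ 0) (hV : ∀ x ∈ V, P.IsRoot x) :
    Fintype.card K ^ finrank K V ≤ P.natDegree := by
  classical
  have := V.finite_of_forall_isRoot hP hV
  have := Fintype.ofFinite V
  have hroot : ∀ x : V, (x : L) ∈ P.roots.toFinset := fun x =>
    Multiset.mem_toFinset.mpr ((mem_roots hP).mpr (hV x x.2))
  calc Fintype.card K ^ finrank K V = Fintype.card V := Module.card_eq_pow_finrank.symm
    _ ≤ Fintype.card P.roots.toFinset :=
      Fintype.card_le_of_injective (fun x => ⟨x, hroot x⟩) fun x y h =>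
        Subtype.ext (congrArg Subtype.val h :)
    _ = P.roots.toFinset.card := Fintype.card_coe _
    _ ≤ Multiset.card P.roots := Multiset.toFinset_card_le _
    _ ≤ P.natDegree := card_roots' P

section LinearizedPolynomial

variable {L : Type*} [Field L] {k : ℕ}

noncomputable def linearizedPoly (q : ℕ) (a : Fin k → L) : L[X] :=
  ∑ j, C (a j) * X ^ q ^ (j : ℕ)

theorem eval_linearizedPoly (q : ℕ) (a : Fin k → L) (x : L) :
    (linearizedPoly q a).eval x = ∑ j, a j * x ^ q ^ (j : ℕ) := by
  simp [linearizedPoly, eval_finsetSum]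

theorem coeff_linearizedPoly_pow {q : ℕ} (hq : 1 < q) (a : Fin k → L) (j : Fin k) :
    (linearizedPoly q a).coeff (q ^ (j : ℕ)) = a j := by
  have hinj : Function.Injective fun i : Fin k => q ^ (i : ℕ) :=
    (Nat.pow_right_injective hq).comp Fin.val_injective
  rw [linearizedPoly, finsetSum_coeff, Finset.sum_eq_single j]
  · simp
  · intro i _ hij
    simp [coeff_X_pow, (hinj.ne hij).symm]
  · simp

theorem linearizedPoly_ne_zero {q : ℕ} (hq : 1 < q) {a : Fin k → L} (ha : a ≠ 0) :
    linearizedPoly q a ≠ 0 := by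
  obtain ⟨j, hj⟩ := Function.ne_iff.mp ha
  intro h
  exact hj (by rw [← coeff_linearizedPoly_pow hq a j, h, coeff_zero, Pi.zero_apply])

theorem natDegree_linearizedPoly_le {q : ℕ} (hq : 0 < q) (a : Fin k → L) :
    (linearizedPoly q a).natDegree ≤ q ^ (k - 1) := by
  refine natDegree_sum_le_of_forall_le _ _ fun j _ => ?_
  exact (natDegree_C_mul_X_pow_le _ _).trans
    (Nat.pow_le_pow_right hq (Nat.le_sub_one_of_lt j.isLt))

end LinearizedPolynomial

section LinearizedMap

variable (K : Type*) {L : Type*} [Field K] [Fintype K] [Field L] [Algebra K L] {k : ℕ}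

noncomputable def linearizedMap (a : Fin k → L) : L →ₗ[K] L :=
  ∑ j, a j • (FiniteField.frobeniusAlgHom K L ^ (j : ℕ)).toLinearMap

variable {K}

theorem linearizedMap_apply (a : Fin k → L) (x : L) :
    linearizedMap K a x = (linearizedPoly (Fintype.card K) a).eval x := by
  simp [linearizedMap, eval_linearizedPoly, AlgHom.coe_pow, FiniteField.coe_frobeniusAlgHom,
    pow_iterate]

theorem linearizedMap_sub (a b : Fin k → L) :
    linearizedMap K a - linearizedMap K b = linearizedMap K (a - b) := by
  ext x
  simp [linearizedMap_apply, eval_linearizedPoly, sub_mul]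

theorem isRoot_linearizedPoly_of_mem_ker {a : Fin k → L} {x : L}
    (hx : x ∈ ker (linearizedMap K a)) : (linearizedPoly (Fintype.card K) a).IsRoot x := by
  rwa [IsRoot, ← linearizedMap_apply]

theorem finite_ker_linearizedMap {a : Fin k → L} (ha : a ≠ 0) :
    Finite (ker (linearizedMap K a)) :=
  Submodule.finite_of_forall_isRoot _ (linearizedPoly_ne_zero Fintype.one_lt_card ha)
    fun _ => isRoot_linearizedPoly_of_mem_ker

theorem finrank_ker_linearizedMap_le {a : Fin k → L} (ha : a ≠ 0) :
    finrank K (ker (linearizedMap K a)) ≤ k - 1 := by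
  refine (Nat.pow_le_pow_iff_right (Fintype.one_lt_card (α := K))).mp ?_
  calc Fintype.card K ^ finrank K (ker (linearizedMap K a))
      ≤ (linearizedPoly (Fintype.card K) a).natDegree :=
        Submodule.card_pow_finrank_le_natDegree _ (linearizedPoly_ne_zero Fintype.one_lt_card ha)
          fun _ => isRoot_linearizedPoly_of_mem_ker
    _ ≤ Fintype.card K ^ (k - 1) := natDegree_linearizedPoly_le Fintype.card_pos a

end LinearizedMap

theorem KKword_le_graph {K L : Type*} [Field K] [Fintype K] [Field L] [Algebra K L]
    {k ℓ : ℕ} (α : Fin ℓ → L) (a : Fin k → L) :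
    KKword K L k ℓ α a ≤ (linearizedMap K a).graph := by
  refine Submodule.span_le.mpr (Set.range_subset_iff.mpr fun i => ?_)
  simp [LinearMap.mem_graph_iff, linearizedMap_apply, eval_linearizedPoly]

theorem stmt3_general (K L : Type*) [Field K] [Fintype K] [Field L] [Algebra K L]
    (k ℓ : ℕ)
    (α : Fin ℓ → L)
    (a b : Fin k → L) (hab : a ≠ b) :
    Module.finrank K ↥(KKword K L k ℓ α a ⊓ KKword K L k ℓ α b) ≤ k - 1 := by
  have hab' : a - b ≠ 0 := sub_ne_zero.mpr hab
  have hle : KKword K L k ℓ α a ⊓ KKword K L k ℓ α b ≤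
      (ker (linearizedMap K (a - b))).map (LinearMap.id.prod (linearizedMap K a)) := by
    rw [← linearizedMap_sub, ← LinearMap.graph_inf_graph]
    exact inf_le_inf (KKword_le_graph α a) (KKword_le_graph α b)
  have := finite_ker_linearizedMap (K := K) hab'
  calc _ ≤ _ := Submodule.finrank_mono hle
    _ ≤ _ := Submodule.finrank_map_le _ _
    _ ≤ k - 1 := finrank_ker_linearizedMap_le hab'

/-- Distinct `q`-linearized polynomials of `q`-degree at most `k-1` yield codewords
intersecting in dimension at most `k - 1`. -/
theorem stmt3 (K L : Type*) [Field K] [Fintype K] [Field L] [Algebra K L]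
    [FiniteDimensional K L] (k ℓ : ℕ) (hk : 1 ≤ k) (hkl : k ≤ ℓ)
    (α : Fin ℓ → L) (hα : LinearIndependent K α)
    (a b : Fin k → L) (hab : a ≠ b) :
    Module.finrank K ↥(KKword K L k ℓ α a ⊓ KKword K L k ℓ α b) ≤ k - 1 :=
  stmt3_general K L k ℓ α a b hab
end

section
/- The Kötter–Kschischang code K[ℓ+m, ℓ, k] = { E(f) : f a q-linearized polynomial of q-degree ≤ k-1 over F_{q^m} } has exactly q^{mk} codewords; i.e., the map f ↦ E(f) is injective on the q^{mk} linearized polynomials of q-degree at most k-1, when k ≤ ℓ. -/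
open Polynomial in
/-- A nonzero linearized polynomial of `q`-degree at most `k-1` cannot vanish on `k`
linearly independent points. -/
theorem KK_key (K L : Type*) [Field K] [Fintype K] [Field L] [Algebra K L]
    (k : ℕ) (β : Fin k → L) (hβ : LinearIndependent K β) (c : Fin k → L)
    (hc : ∀ i : Fin k, ∑ j : Fin k, c j * β i ^ (Fintype.card K) ^ (j : ℕ) = 0) :
    c = 0 := by
  classical
  by_contra hne
  obtain ⟨j0, hj0⟩ : ∃ j0, c j0 ≠ 0 := by
    by_contra h; push_neg at h; exact hne (funext h)
  set q := Fintype.card K with hqdef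
  have hq : 1 < q := Fintype.one_lt_card
  -- characteristic setup
  set p := ringChar K with hpdef
  haveI hKp : CharP K p := ringChar.charP K
  have hp : p.Prime := CharP.char_is_prime K p
  haveI : Fact p.Prime := ⟨hp⟩
  obtain ⟨n, -, hcard⟩ : ∃ n : ℕ+, Nat.Prime p ∧ q = p ^ (n : ℕ) := FiniteField.card K p
  haveI hLp : CharP L p := charP_of_injective_algebraMap (algebraMap K L).injective p
  -- the function x ↦ ∑ c j * x ^ q ^ j vanishes on the span of β
  have hadd : ∀ (j : ℕ) (x y : L), (x + y) ^ q ^ j = x ^ q ^ j + y ^ q ^ j := by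
    intro j x y
    have hqe : q ^ j = p ^ ((n : ℕ) * j) := by rw [hcard, ← pow_mul]
    rw [hqe]
    exact add_pow_char_pow (R := L) x y p ((n:ℕ)*j)
  have hsmul : ∀ (j : ℕ) (d : K) (x : L), (d • x) ^ q ^ j = d • x ^ q ^ j := by
    intro j d x
    rw [Algebra.smul_def, Algebra.smul_def, mul_pow, ← map_pow,
      FiniteField.pow_card_pow]
  have hvanish : ∀ x ∈ Submodule.span K (Set.range β),
      ∑ j : Fin k, c j * x ^ q ^ (j : ℕ) = 0 := by
    intro x hx
    induction hx using Submodule.span_induction with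
    | mem x hx => obtain ⟨i, rfl⟩ := hx; exact hc i
    | zero =>
      refine Finset.sum_eq_zero fun j _ => ?_
      rw [zero_pow (pow_pos (by omega : 0 < q) _).ne', mul_zero]
    | add x y hx hy ihx ihy =>
      have : ∑ j : Fin k, c j * (x + y) ^ q ^ (j : ℕ)
          = (∑ j : Fin k, c j * x ^ q ^ (j : ℕ)) + ∑ j : Fin k, c j * y ^ q ^ (j : ℕ) := by
        rw [← Finset.sum_add_distrib]
        refine Finset.sum_congr rfl fun j _ => ?_
        rw [hadd, mul_add]
      rw [this, ihx, ihy, add_zero]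
    | smul d x hx ih =>
      have : ∑ j : Fin k, c j * (d • x) ^ q ^ (j : ℕ)
          = d • ∑ j : Fin k, c j * x ^ q ^ (j : ℕ) := by
        rw [Finset.smul_sum]
        refine Finset.sum_congr rfl fun j _ => ?_
        rw [hsmul, Algebra.smul_def, Algebra.smul_def]; ring
      rw [this, ih, smul_zero]
  -- the associated polynomial
  set P : L[X] := ∑ j : Fin k, C (c j) * X ^ (q ^ (j : ℕ)) with hPdef
  have hqinj : Function.Injective (fun m : ℕ => q ^ m) :=
    Nat.pow_right_injective hq
  have hcoeff : P.coeff (q ^ (j0 : ℕ)) = c j0 := by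
    rw [hPdef, finset_sum_coeff]
    rw [Finset.sum_eq_single j0]
    · simp
    · intro b _ hb
      rw [coeff_C_mul, coeff_X_pow, if_neg, mul_zero]
      exact fun h => hb (Fin.ext (hqinj h.symm))
    · intro h; exact absurd (Finset.mem_univ j0) h
  have hP0 : P ≠ 0 := fun h => hj0 (by rw [← hcoeff, h, coeff_zero])
  have hdeg : P.natDegree ≤ q ^ (k - 1) := by
    refine natDegree_sum_le_of_forall_le _ _ fun j _ => ?_
    calc (C (c j) * X ^ (q ^ (j : ℕ))).natDegree
        ≤ (C (c j)).natDegree + (X ^ (q ^ (j : ℕ)) : L[X]).natDegree := natDegree_mul_le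
      _ ≤ q ^ (j : ℕ) := by simp
      _ ≤ q ^ (k - 1) := Nat.pow_le_pow_right (le_of_lt hq) (Nat.le_sub_one_of_lt j.isLt)
  -- the span of β consists of roots of P
  set S := Submodule.span K (Set.range β) with hS
  haveI : Module.Finite K S := FiniteDimensional.span_of_finite K (Set.finite_range β)
  haveI : Finite S := Module.finite_of_finite K
  haveI : Fintype S := Fintype.ofFinite S
  have hroot : ∀ s : S, P.IsRoot (s : L) := by
    intro s
    have := hvanish s.1 s.2
    rw [IsRoot, hPdef, eval_finset_sum]
    simpa using this
  have hcardS : Fintype.card S = q ^ k := by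
    rw [Module.card_eq_pow_finrank (K := K) (V := S), finrank_span_eq_card hβ, Fintype.card_fin]
  have hinj2 : Function.Injective (fun s : S => (⟨(s : L), by
      rw [Multiset.mem_toFinset, mem_roots hP0]; exact hroot s⟩ : P.roots.toFinset)) := by
    intro s t h
    exact Subtype.ext (Subtype.mk_eq_mk.mp h)
  have hle : Fintype.card S ≤ P.roots.toFinset.card := by
    have := Fintype.card_le_of_injective _ hinj2
    simpa using this
  have : q ^ k ≤ q ^ (k - 1) := by
    calc q ^ k = Fintype.card S := hcardS.symm
      _ ≤ P.roots.toFinset.card := hle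
      _ ≤ Multiset.card P.roots := Multiset.toFinset_card_le _
      _ ≤ P.natDegree := card_roots' P
      _ ≤ q ^ (k - 1) := hdeg
  have hlt : q ^ (k - 1) < q ^ k := Nat.pow_lt_pow_right hq (Nat.sub_lt j0.pos Nat.one_pos)
  omega

/-- The map `f ↦ E(f)` is injective on linearized polynomials of `q`-degree at most `k-1`
when `k ≤ ℓ`, so the Kötter–Kschischang code has exactly `q^{mk}` codewords. -/
theorem stmt5 (K L : Type*) [Field K] [Fintype K] [Field L] [Algebra K L]
    [FiniteDimensional K L] (k ℓ : ℕ) (hkl : k ≤ ℓ)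
    (α : Fin ℓ → L) (hα : LinearIndependent K α) :
    Function.Injective (fun a : Fin k → L => KKword K L k ℓ α a) ∧
    Nat.card (Set.range fun a : Fin k → L => KKword K L k ℓ α a) =
      (Fintype.card K) ^ (Module.finrank K L * k) := by
  set q := Fintype.card K with hqdef
  have hinj : Function.Injective (fun a : Fin k → L => KKword K L k ℓ α a) := by
    intro a b hab
    simp only at hab
    -- the values agree at each α i
    have hval : ∀ i : Fin ℓ, (∑ j : Fin k, a j * α i ^ q ^ (j : ℕ))
        = ∑ j : Fin k, b j * α i ^ q ^ (j : ℕ) := by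
      intro i
      have hmem : ((α i, ∑ j : Fin k, a j * α i ^ q ^ (j : ℕ)) : L × L) ∈
          KKword K L k ℓ α b := by
        rw [← hab]
        exact Submodule.subset_span ⟨i, rfl⟩
      rw [KKword, Submodule.mem_span_range_iff_exists_fun] at hmem
      obtain ⟨c, hc⟩ := hmem
      have h1 : ∑ j : Fin ℓ, c j • α j = α i := by
        have := congrArg Prod.fst hc
        simpa [Prod.fst_sum] using this
      have h2 : ∑ j : Fin ℓ, c j • (∑ m : Fin k, b m * α j ^ q ^ (m : ℕ))
          = ∑ j : Fin k, a j * α i ^ q ^ (j : ℕ) := by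
        have := congrArg Prod.snd hc
        simpa [Prod.snd_sum] using this
      have hcs : c = Pi.single i (1 : K) := by
        have hz : ∑ j : Fin ℓ, (c j - (Pi.single i (1 : K) : Fin ℓ → K) j) • α j = 0 := by
          simp only [sub_smul]
          rw [Finset.sum_sub_distrib, h1]
          simp [Pi.single_apply, ite_smul]
        have h0 := Fintype.linearIndependent_iff.mp hα _ hz
        funext j
        exact sub_eq_zero.mp (h0 j)
      rw [hcs] at h2
      rw [← h2]
      simp [Pi.single_apply, ite_smul]
    -- apply the key lemma to a - b
    have hβ : LinearIndependent K (α ∘ Fin.castLE hkl) :=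
      hα.comp _ (Fin.castLE_injective hkl)
    have hzero : a - b = 0 := by
      apply KK_key K L k (α ∘ Fin.castLE hkl) hβ
      intro i
      have := hval (Fin.castLE hkl i)
      simp only [Function.comp_apply, Pi.sub_apply]
      rw [Finset.sum_congr rfl (fun j _ => sub_mul (a j) (b j) _),
        Finset.sum_sub_distrib, this, sub_self]
    have := sub_eq_zero.mp hzero
    exact this
  refine ⟨hinj, ?_⟩
  haveI : Finite L := Module.finite_of_finite K
  haveI : Fintype L := Fintype.ofFinite L
  rw [Nat.card_range_of_injective hinj]
  rw [Nat.card_eq_fintype_card, Fintype.card_fun]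
  rw [Module.card_eq_pow_finrank (K := K) (V := L), Fintype.card_fin, ← pow_mul]
end

section
/- Let A_q(ℓ+m, ℓ, k) denote the maximum number of ℓ-dimensional subspaces of an (ℓ+m)-dimensional F_q-space such that any two distinct subspaces intersect in dimension at most k-1. Then A_q(ℓ+m, ℓ, k) ≤ Gaussian binomial [m+k choose k]_q = Π_{i=0}^{k-1} (q^{m+k-i} - 1)/(q^{k-i} - 1). -/
/-!
Double counting of linearly independent `k`-tuples. Each member of `C` contains
`∏_{i<k} (q^ℓ - q^i)` of them, no tuple lies in two members (its span would be a
`k`-dimensional subspace of their intersection), and `V` contains `∏_{i<k} (q^(ℓ+m) - q^i)`.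
So `|C| ≤ ∏_{i<k} (q^(ℓ-i+m) - 1) / (q^(ℓ-i) - 1)`, and since `(Q^(a+m) - 1) / (Q^a - 1)`
decreases in `a`, each factor is at most the one with `a = k - i`.
-/

open Module Function

theorem Nat.card_mul_le_card_of_pairwise_disjoint {ι α : Type*} [Finite ι] {s : ι → Set α}
    {t : Set α} [Finite t] (hst : ∀ i, s i ⊆ t) (hs : Pairwise (Disjoint on s)) {n : ℕ}
    (hn : ∀ i, Nat.card (s i) = n) : Nat.card ι * n ≤ Nat.card t := by
  have := Fintype.ofFinite ι
  have (i : ι) : Finite (s i) := Finite.Set.subset t (hst i)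
  have hunion : (⋃ i, s i) ⊆ t := Set.iUnion_subset hst
  have : Finite ↑(⋃ i, s i) := Finite.Set.subset t hunion
  calc Nat.card ι * n = Nat.card (Σ i, s i) := by simp [Nat.card_sigma, hn]
    _ ≤ Nat.card (⋃ i, s i) :=
      Nat.card_le_card_of_injective _ (Set.sigmaToiUnion_injective s hs)
    _ ≤ Nat.card t :=
      Nat.card_le_card_of_injective _ (Set.inclusion_injective hunion)

section LinIndepTuples

variable {K V : Type*} [DivisionRing K] [AddCommGroup V] [Module K V]

def linIndepTuplesIn (k : ℕ) (U : Submodule K V) : Set (Fin k → V) :=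
  {f | LinearIndependent K f ∧ ∀ i, f i ∈ U}

def linIndepTuplesInEquiv (k : ℕ) (U : Submodule K V) :
    {f : Fin k → U // LinearIndependent K f} ≃ linIndepTuplesIn k U where
  toFun f := ⟨fun i => f.1 i, f.2.map' U.subtype U.ker_subtype, fun i => (f.1 i).2⟩
  invFun f :=
    ⟨fun i => ⟨f.1 i, f.2.2 i⟩, (U.subtype.linearIndependent_iff U.ker_subtype).mp f.2.1⟩
  left_inv _ := rfl
  right_inv _ := rfl

theorem card_linIndepTuplesIn [Fintype K] [Finite V] {k : ℕ} (U : Submodule K V)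
    (hk : k ≤ finrank K U) :
    Nat.card (linIndepTuplesIn k U) =
      ∏ i : Fin k, (Fintype.card K ^ finrank K U - Fintype.card K ^ (i : ℕ)) := by
  rw [← Nat.card_congr (linIndepTuplesInEquiv k U), card_linearIndependent hk]

theorem disjoint_linIndepTuplesIn [FiniteDimensional K V] {k : ℕ} {U W : Submodule K V}
    (h : finrank K ↥(U ⊓ W) < k) :
    Disjoint (linIndepTuplesIn k U) (linIndepTuplesIn k W) := by
  refine Set.disjoint_left.mpr fun f ⟨hf, hfU⟩ ⟨_, hfW⟩ => h.not_ge ?_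
  have hspan : Submodule.span K (Set.range f) ≤ U ⊓ W :=
    Submodule.span_le.mpr <| Set.range_subset_iff.mpr fun i => ⟨hfU i, hfW i⟩
  calc k = finrank K (Submodule.span K (Set.range f)) := by
        rw [finrank_span_eq_card hf, Fintype.card_fin]
    _ ≤ finrank K ↥(U ⊓ W) := Submodule.finrank_mono hspan

theorem linIndepTuplesIn_subset_top (k : ℕ) (U : Submodule K V) :
    linIndepTuplesIn k U ⊆ linIndepTuplesIn k (⊤ : Submodule K V) :=
  fun _ hf => ⟨hf.1, fun _ => Submodule.mem_top⟩

theorem card_mul_prod_le_of_finrank_inf_lt [Fintype K] [Finite V] {k ℓ : ℕ} (hkℓ : k ≤ ℓ)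
    (C : Set (Submodule K V)) (hC : ∀ U ∈ C, finrank K U = ℓ)
    (hint : ∀ U ∈ C, ∀ W ∈ C, U ≠ W → finrank K ↥(U ⊓ W) < k) :
    Nat.card C * ∏ i : Fin k, (Fintype.card K ^ ℓ - Fintype.card K ^ (i : ℕ)) ≤
      ∏ i : Fin k, (Fintype.card K ^ finrank K V - Fintype.card K ^ (i : ℕ)) := by
  obtain rfl | ⟨U₀, hU₀⟩ := C.eq_empty_or_nonempty
  · simp
  have hkV : k ≤ finrank K (⊤ : Submodule K V) := by
    rw [finrank_top]
    exact (hkℓ.trans_eq (hC U₀ hU₀).symm).trans (Submodule.finrank_le U₀)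
  rw [← finrank_top K V, ← card_linIndepTuplesIn ⊤ hkV]
  refine Nat.card_mul_le_card_of_pairwise_disjoint (s := fun U : C => linIndepTuplesIn k U.1)
    (fun U => linIndepTuplesIn_subset_top k U.1)
    (fun U W hUW => disjoint_linIndepTuplesIn (hint U U.2 W W.2 (Subtype.coe_ne_coe.mpr hUW)))
    fun U => ?_
  rw [card_linIndepTuplesIn U.1 ((hC U U.2).symm ▸ hkℓ), hC U U.2]

end LinIndepTuples

section GaussianFactors

variable {R : Type*} [Field R] [LinearOrder R] [IsStrictOrderedRing R] {Q : R}

theorem pow_add_sub_one_div_pow_sub_one_antitone (hQ : 1 < Q) (m : ℕ) {a b : ℕ} (ha : 0 < a)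
    (hab : a ≤ b) : (Q ^ (b + m) - 1) / (Q ^ b - 1) ≤ (Q ^ (a + m) - 1) / (Q ^ a - 1) := by
  obtain ⟨d, rfl⟩ := exists_add_of_le hab
  have hx : 1 < Q ^ a := one_lt_pow₀ hQ ha.ne'
  have hy : 1 ≤ Q ^ d := one_le_pow₀ hQ.le
  have hz : 1 ≤ Q ^ m := one_le_pow₀ hQ.le
  have hxy : 1 < Q ^ (a + d) := one_lt_pow₀ hQ (by omega)
  rw [div_le_div_iff₀ (sub_pos.mpr hxy) (sub_pos.mpr hx)]
  simp only [pow_add]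
  -- after expanding, the claim is `Q^a (Q^d - 1) (Q^m - 1) ≥ 0`
  nlinarith [mul_nonneg (mul_nonneg (zero_le_one.trans hx.le) (sub_nonneg.mpr hz))
    (sub_nonneg.mpr hy)]

theorem pow_sub_pow_div_le_gaussian_factor (hQ : 1 < Q) (m : ℕ) {i k ℓ : ℕ} (hik : i < k)
    (hkℓ : k ≤ ℓ) :
    (Q ^ (ℓ + m) - Q ^ i) / (Q ^ ℓ - Q ^ i) ≤ (Q ^ (m + k - i) - 1) / (Q ^ (k - i) - 1) := by
  have hQi : Q ^ i ≠ 0 := pow_ne_zero i (zero_lt_one.trans hQ).ne'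
  have hfactor : ∀ n, i ≤ n → Q ^ n - Q ^ i = Q ^ i * (Q ^ (n - i) - 1) := fun n hn => by
    rw [mul_sub, mul_one, pow_mul_pow_sub Q hn]
  rw [hfactor _ (by omega), hfactor _ (by omega), mul_div_mul_left _ _ hQi,
    show ℓ + m - i = ℓ - i + m by omega, show m + k - i = k - i + m by omega]
  exact pow_add_sub_one_div_pow_sub_one_antitone hQ m (by omega) (by omega)

theorem prod_pow_sub_pow_div_le_prod_gaussian_factor (hQ : 1 < Q) (m : ℕ) {k ℓ : ℕ}
    (hkℓ : k ≤ ℓ) :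
    ∏ i ∈ Finset.range k, (Q ^ (ℓ + m) - Q ^ i) / (Q ^ ℓ - Q ^ i) ≤
      ∏ i ∈ Finset.range k, (Q ^ (m + k - i) - 1) / (Q ^ (k - i) - 1) := by
  refine Finset.prod_le_prod (fun i hi => ?_) fun i hi =>
    pow_sub_pow_div_le_gaussian_factor hQ m (Finset.mem_range.mp hi) hkℓ
  have hi : i < k := Finset.mem_range.mp hi
  exact div_nonneg (sub_nonneg.mpr (pow_le_pow_right₀ hQ.le (by omega)))
    (sub_nonneg.mpr (pow_le_pow_right₀ hQ.le (by omega)))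

end GaussianFactors

theorem Nat.cast_prod_pow_sub_pow {R : Type*} [CommRing R] {q n k : ℕ} (hq : 0 < q)
    (hkn : k ≤ n) :
    ((∏ i : Fin k, (q ^ n - q ^ (i : ℕ)) : ℕ) : R) =
      ∏ i ∈ Finset.range k, ((q : R) ^ n - q ^ i) := by
  rw [Nat.cast_prod, Fin.prod_univ_eq_prod_range (fun i => ((q ^ n - q ^ i : ℕ) : R))]
  refine Finset.prod_congr rfl fun i hi => ?_
  rw [Nat.cast_sub (Nat.pow_le_pow_right hq ((Finset.mem_range.mp hi).le.trans hkn))]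
  push_cast
  rfl

theorem stmt7_general (q k ℓ m : ℕ) (K V : Type*) [Field K] [Fintype K]
    (hq : Fintype.card K = q)
    [AddCommGroup V] [Module K V] [FiniteDimensional K V]
    (hdim : Module.finrank K V = ℓ + m) (hk : 1 ≤ k) (hkl : k ≤ ℓ)
    (C : Set (Submodule K V)) (hC : ∀ U ∈ C, Module.finrank K ↥U = ℓ)
    (hint : ∀ U ∈ C, ∀ W ∈ C, U ≠ W → Module.finrank K ↥(U ⊓ W) ≤ k - 1) :
    (Nat.card C : ℚ) ≤
      ∏ i ∈ Finset.range k, (((q : ℚ) ^ (m + k - i) - 1) / ((q : ℚ) ^ (k - i) - 1)) := by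
  have : Finite V := Module.finite_of_finite K
  have hq1 : 1 < q := hq ▸ Fintype.one_lt_card
  have hcount := card_mul_prod_le_of_finrank_inf_lt hkl C hC fun U hU W hW hUW => by
    have := hint U hU W hW hUW
    omega
  rw [hq, hdim] at hcount
  have hA : 0 < ∏ i ∈ Finset.range k, ((q : ℚ) ^ ℓ - q ^ i) :=
    Finset.prod_pos fun i hi => sub_pos.mpr <|
      pow_lt_pow_right₀ (by exact_mod_cast hq1) ((Finset.mem_range.mp hi).trans_le hkl)
  calc (Nat.card C : ℚ)
      ≤ (∏ i ∈ Finset.range k, ((q : ℚ) ^ (ℓ + m) - q ^ i)) /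
          ∏ i ∈ Finset.range k, ((q : ℚ) ^ ℓ - q ^ i) := by
        rw [le_div_iff₀ hA, ← Nat.cast_prod_pow_sub_pow (by omega) hkl,
          ← Nat.cast_prod_pow_sub_pow (by omega) (by omega)]
        exact_mod_cast hcount
    _ = ∏ i ∈ Finset.range k, ((q : ℚ) ^ (ℓ + m) - q ^ i) / ((q : ℚ) ^ ℓ - q ^ i) :=
        (Finset.prod_div_distrib ..).symm
    _ ≤ _ := prod_pow_sub_pow_div_le_prod_gaussian_factor (by exact_mod_cast hq1) m hkl

/-- Singleton-type bound: any family of `ℓ`-dimensional subspaces of an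
`(ℓ+m)`-dimensional space over `F_q`, pairwise intersecting in dimension at most `k-1`,
has size at most the Gaussian binomial `[m+k choose k]_q`. -/
theorem stmt7 (q k ℓ m : ℕ) (K V : Type*) [Field K] [Fintype K]
    (hq : Fintype.card K = q)
    [AddCommGroup V] [Module K V] [FiniteDimensional K V]
    (hdim : Module.finrank K V = ℓ + m) (hk : 1 ≤ k) (hkl : k ≤ ℓ) (hlm : ℓ ≤ m)
    (C : Set (Submodule K V)) (hC : ∀ U ∈ C, Module.finrank K ↥U = ℓ)
    (hint : ∀ U ∈ C, ∀ W ∈ C, U ≠ W → Module.finrank K ↥(U ⊓ W) ≤ k - 1) :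
    (Nat.card C : ℚ) ≤
      ∏ i ∈ Finset.range k, (((q : ℚ) ^ (m + k - i) - 1) / ((q : ℚ) ^ (k - i) - 1)) :=
  stmt7_general q k ℓ m K V hq hdim hk hkl C hC hint
end

section
/- With A_q as above, the anticode-type bound holds: A_q(ℓ+m, ℓ, k) ≤ [ℓ+m choose k]_q / [ℓ choose k]_q, where [· choose ·]_q denotes Gaussian binomial coefficients. -/
/-- The Gaussian binomial coefficient `[n choose k]_q` as a rational number. -/
def gaussBinom (q : ℚ) (n k : ℕ) : ℚ :=
  ∏ i ∈ Finset.range k, (q ^ (n - i) - 1) / (q ^ (k - i) - 1)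

open Finset

section count

variable {K V : Type*} [Field K] [Fintype K] [AddCommGroup V] [Module K V]
  [FiniteDimensional K V]

/-- Counting fiber: linearly independent k-tuples with span W, for finrank W = k. -/
noncomputable def fiberEquiv (k : ℕ) (W : Submodule K V) (hW : Module.finrank K W = k) :
    {t : Fin k → W // LinearIndependent K t} ≃
    {s : {s : Fin k → V // LinearIndependent K s} // Submodule.span K (Set.range s.1) = W} := by
  refine Equiv.ofBijective (fun t => ⟨⟨W.subtype ∘ t.1, t.2.map' W.subtype (Submodule.ker_subtype W)⟩, ?_⟩) ⟨?_, ?_⟩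
  · have hsp : Submodule.span K (Set.range t.1) = ⊤ := by
      apply Submodule.eq_top_of_finrank_eq
      rw [finrank_span_eq_card t.2, Fintype.card_fin, hW]
    rw [Set.range_comp, ← Submodule.map_span, hsp, Submodule.map_subtype_top]
  · intro a b hab
    have : W.subtype ∘ a.1 = W.subtype ∘ b.1 := congrArg (fun x => x.1.1) hab
    ext i
    exact congrFun this i
  · rintro ⟨⟨s, hs⟩, hsp⟩
    have hmem : ∀ i, s i ∈ W := fun i => hsp ▸ Submodule.subset_span (Set.mem_range_self i)
    refine ⟨⟨fun i => ⟨s i, hmem i⟩, ?_⟩, rfl⟩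
    exact hs.of_comp W.subtype

set_option maxHeartbeats 800000 in
lemma grass_card (k : ℕ) (hk : k ≤ Module.finrank K V) :
    Nat.card {W : Submodule K V // Module.finrank K ↥W = k} *
      ∏ i ∈ Finset.range k, (Fintype.card K ^ k - Fintype.card K ^ i) =
    ∏ i ∈ Finset.range k, (Fintype.card K ^ Module.finrank K V - Fintype.card K ^ i) := by
  classical
  have : Finite V := Module.finite_of_finite K
  have hli : Nat.card {s : Fin k → V // LinearIndependent K s} =
      ∏ i ∈ Finset.range k, (Fintype.card K ^ Module.finrank K V - Fintype.card K ^ i) := by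
    rw [card_linearIndependent hk]
    exact Fin.prod_univ_eq_prod_range (fun i => Fintype.card K ^ Module.finrank K V - Fintype.card K ^ i) k
  set Gr := {W : Submodule K V // Module.finrank K ↥W = k} with hGr
  let φ : {s : Fin k → V // LinearIndependent K s} → Gr := fun s =>
    ⟨Submodule.span K (Set.range s.1), by
      rw [finrank_span_eq_card s.2, Fintype.card_fin]⟩
  have hfib : ∀ W : Gr, Nat.card {s // φ s = W} =
      ∏ i ∈ Finset.range k, (Fintype.card K ^ k - Fintype.card K ^ i) := by
    intro W
    have e2 : {s // φ s = W} ≃ {s : {s : Fin k → V // LinearIndependent K s} //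
        Submodule.span K (Set.range s.1) = W.1} := by
      apply Equiv.subtypeEquivRight
      intro s
      constructor
      · intro h; exact congrArg Subtype.val h
      · intro h; exact Subtype.ext h
    rw [Nat.card_congr (e2.trans (fiberEquiv k W.1 W.2).symm)]
    have h3 := card_linearIndependent (K := K) (V := ↥W.1) (k := k) (by rw [W.2])
    rw [W.2] at h3
    rw [h3]
    exact Fin.prod_univ_eq_prod_range (fun i => Fintype.card K ^ k - Fintype.card K ^ i) k
  have hsig : Nat.card {s : Fin k → V // LinearIndependent K s} =
      Nat.card Gr * ∏ i ∈ Finset.range k, (Fintype.card K ^ k - Fintype.card K ^ i) := by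
    rw [Nat.card_congr (Equiv.sigmaFiberEquiv φ).symm]
    have hfin : Finite Gr := Finite.of_injective (fun W => W.1)
      (fun a b h => Subtype.ext h)
    cases nonempty_fintype Gr
    have : ∀ W : Gr, Fintype {s // φ s = W} := fun W => Fintype.ofFinite _
    rw [Nat.card_eq_fintype_card, Fintype.card_sigma]
    rw [Finset.sum_congr rfl (fun W _ => by rw [Fintype.card_eq_nat_card, hfib W])]
    rw [Finset.sum_const, smul_eq_mul, Nat.card_eq_fintype_card, Finset.card_univ]
  rw [← hsig, hli]

end count

section count2
variable {K V : Type*} [Field K] [Fintype K] [AddCommGroup V] [Module K V]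
  [FiniteDimensional K V]

set_option maxHeartbeats 800000 in
lemma main_count (k ℓ : ℕ) (hk1 : 1 ≤ k) (hkl : k ≤ ℓ)
    (hl : ℓ ≤ Module.finrank K V)
    (C : Set (Submodule K V)) (hC : ∀ U ∈ C, Module.finrank K ↥U = ℓ)
    (hint : ∀ U ∈ C, ∀ W ∈ C, U ≠ W → Module.finrank K ↥(U ⊓ W) ≤ k - 1) :
    Nat.card C * ∏ i ∈ Finset.range k, (Fintype.card K ^ ℓ - Fintype.card K ^ i) ≤
    ∏ i ∈ Finset.range k, (Fintype.card K ^ Module.finrank K V - Fintype.card K ^ i) := by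
  classical
  have hfinV : Finite V := Module.finite_of_finite K
  have hfinSub : Finite (Submodule K V) :=
    Finite.of_injective (fun W => (W : Set V)) SetLike.coe_injective
  let Fib : ↥C → Type _ := fun U => {W' : Submodule K ↥U.1 // Module.finrank K ↥W' = k}
  let Gr := {W : Submodule K V // Module.finrank K ↥W = k}
  let ψ : (Σ U : ↥C, Fib U) → Gr := fun p =>
    ⟨(p.2.1).map (p.1.1).subtype, by
      rw [Submodule.finrank_map_subtype_eq]; exact p.2.2⟩
  have hψinj : Function.Injective ψ := by
    rintro ⟨U, W'⟩ ⟨U', W''⟩ h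
    have hval : (W'.1).map (U.1).subtype = (W''.1).map (U'.1).subtype :=
      congrArg Subtype.val h
    have hUU' : U = U' := by
      by_contra hne
      have hne' : U.1 ≠ U'.1 := fun hh => hne (Subtype.ext hh)
      have h1 : (W'.1).map (U.1).subtype ≤ U.1 := Submodule.map_subtype_le _ _
      have h2 : (W'.1).map (U.1).subtype ≤ U'.1 := hval ▸ Submodule.map_subtype_le _ _
      have h3 : (W'.1).map (U.1).subtype ≤ U.1 ⊓ U'.1 := le_inf h1 h2
      have h4 : Module.finrank K ↥((W'.1).map (U.1).subtype) ≤
          Module.finrank K ↥(U.1 ⊓ U'.1) := Submodule.finrank_mono h3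
      rw [Submodule.finrank_map_subtype_eq, W'.2] at h4
      have h5 := hint U.1 U.2 U'.1 U'.2 hne'
      omega
    subst hUU'
    have : W' = W'' := Subtype.ext
      (Submodule.map_injective_of_injective (Submodule.injective_subtype U.1) hval)
    rw [this]
  have hGrFin : Finite Gr := inferInstance
  have hle : Nat.card (Σ U : ↥C, Fib U) ≤ Nat.card Gr :=
    Nat.card_le_card_of_injective ψ hψinj
  -- card of sigma
  have hCfin : Finite ↥C := inferInstance
  cases nonempty_fintype (↥C)
  have : ∀ U : ↥C, Fintype (Fib U) := fun U => Fintype.ofFinite _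
  have hfibcount : ∀ U : ↥C, Nat.card (Fib U) *
      ∏ i ∈ Finset.range k, (Fintype.card K ^ k - Fintype.card K ^ i) =
      ∏ i ∈ Finset.range k, (Fintype.card K ^ ℓ - Fintype.card K ^ i) := by
    intro U
    have hU : Module.finrank K ↥U.1 = ℓ := hC U.1 U.2
    have := grass_card (K := K) (V := ↥U.1) k (by rw [hU]; exact hkl)
    rwa [hU] at this
  have hsigcard : Nat.card (Σ U : ↥C, Fib U) *
      ∏ i ∈ Finset.range k, (Fintype.card K ^ k - Fintype.card K ^ i) =
      Nat.card C * ∏ i ∈ Finset.range k, (Fintype.card K ^ ℓ - Fintype.card K ^ i) := by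
    rw [Nat.card_eq_fintype_card, Fintype.card_sigma, Finset.sum_mul]
    rw [Finset.sum_congr rfl (fun U _ => by
      rw [Fintype.card_eq_nat_card, hfibcount U])]
    rw [Finset.sum_const, smul_eq_mul, Finset.card_univ, ← Nat.card_eq_fintype_card]
  calc Nat.card C * ∏ i ∈ Finset.range k, (Fintype.card K ^ ℓ - Fintype.card K ^ i)
      = Nat.card (Σ U : ↥C, Fib U) *
        ∏ i ∈ Finset.range k, (Fintype.card K ^ k - Fintype.card K ^ i) := hsigcard.symm
    _ ≤ Nat.card Gr *
        ∏ i ∈ Finset.range k, (Fintype.card K ^ k - Fintype.card K ^ i) :=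
        Nat.mul_le_mul_right _ hle
    _ = ∏ i ∈ Finset.range k, (Fintype.card K ^ Module.finrank K V - Fintype.card K ^ i) :=
        grass_card k (le_trans hkl hl)

end count2

lemma cast_prod_sub (q : ℕ) (hq : 2 ≤ q) (k d : ℕ) (hkd : k ≤ d) :
    ((∏ i ∈ Finset.range k, (q ^ d - q ^ i) : ℕ) : ℚ) =
    (∏ i ∈ Finset.range k, (q : ℚ) ^ i) *
      ∏ i ∈ Finset.range k, ((q : ℚ) ^ (d - i) - 1) := by
  rw [Nat.cast_prod, ← Finset.prod_mul_distrib]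
  apply Finset.prod_congr rfl
  intro i hi
  have hid : i ≤ d := le_trans (le_of_lt (Finset.mem_range.mp hi)) hkd
  rw [Nat.cast_sub (Nat.pow_le_pow_right (by omega) hid)]
  have : (q : ℚ) ^ i * (q : ℚ) ^ (d - i) = (q : ℚ) ^ d := by
    rw [← pow_add, Nat.add_sub_cancel' hid]
  push_cast
  linear_combination -this

lemma factor_pos (q : ℕ) (hq : 2 ≤ q) (k d i : ℕ) (hkd : k ≤ d) (hi : i < k) :
    (0 : ℚ) < (q : ℚ) ^ (d - i) - 1 := by
  have h1 : (1 : ℚ) < (q : ℚ) := by exact_mod_cast hq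
  have : (1 : ℚ) < (q : ℚ) ^ (d - i) := one_lt_pow₀ h1 (by omega)
  linarith

lemma gauss_ratio (q : ℕ) (hq : 2 ≤ q) (k ℓ n : ℕ) (hk1 : 1 ≤ k) (hkl : k ≤ ℓ) (hln : ℓ ≤ n) :
    ((∏ i ∈ Finset.range k, (q ^ n - q ^ i) : ℕ) : ℚ) /
    ((∏ i ∈ Finset.range k, (q ^ ℓ - q ^ i) : ℕ) : ℚ) =
    gaussBinom (q : ℚ) n k / gaussBinom (q : ℚ) ℓ k := by
  have hQ : (∏ i ∈ Finset.range k, (q : ℚ) ^ i) ≠ 0 :=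
    Finset.prod_ne_zero_iff.mpr (fun i _ => pow_ne_zero _ (by positivity))
  have hB : (∏ i ∈ Finset.range k, ((q : ℚ) ^ (k - i) - 1)) ≠ 0 :=
    Finset.prod_ne_zero_iff.mpr
      (fun i hi => ne_of_gt (factor_pos q hq k k i le_rfl (Finset.mem_range.mp hi)))
  have hAl : (∏ i ∈ Finset.range k, ((q : ℚ) ^ (ℓ - i) - 1)) ≠ 0 :=
    Finset.prod_ne_zero_iff.mpr
      (fun i hi => ne_of_gt (factor_pos q hq k ℓ i hkl (Finset.mem_range.mp hi)))
  rw [cast_prod_sub q hq k n (le_trans hkl hln), cast_prod_sub q hq k ℓ hkl]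
  unfold gaussBinom
  rw [Finset.prod_div_distrib, Finset.prod_div_distrib]
  rw [mul_div_mul_left _ _ hQ]
  rw [div_div_div_comm, div_self hB, div_one]

/-- Anticode-type (Wang–Xing–Safavi-Naini) bound: any family of `ℓ`-dimensional
subspaces of an `(ℓ+m)`-dimensional space over `F_q`, pairwise intersecting in dimension
at most `k-1`, has size at most `[ℓ+m choose k]_q / [ℓ choose k]_q`. -/
theorem stmt8 (q k ℓ m : ℕ) (K V : Type*) [Field K] [Fintype K]
    (hq : Fintype.card K = q)
    [AddCommGroup V] [Module K V] [FiniteDimensional K V]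
    (hdim : Module.finrank K V = ℓ + m) (hk : 1 ≤ k) (hkl : k ≤ ℓ) (hlm : ℓ ≤ m)
    (C : Set (Submodule K V)) (hC : ∀ U ∈ C, Module.finrank K ↥U = ℓ)
    (hint : ∀ U ∈ C, ∀ W ∈ C, U ≠ W → Module.finrank K ↥(U ⊓ W) ≤ k - 1) :
    (Nat.card C : ℚ) ≤ gaussBinom (q : ℚ) (ℓ + m) k / gaussBinom (q : ℚ) ℓ k := by
  subst hq
  set q := Fintype.card K with hq
  have hq2 : 2 ≤ q := Fintype.one_lt_card
  have hln : ℓ ≤ ℓ + m := Nat.le_add_right _ _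
  have hmain := main_count (K := K) (V := V) k ℓ hk hkl (by omega) C hC hint
  rw [hdim] at hmain
  have hPl : 0 < ∏ i ∈ Finset.range k, (q ^ ℓ - q ^ i) := by
    apply Finset.prod_pos
    intro i hi
    have := Nat.pow_lt_pow_right (by omega : 1 < q)
      (lt_of_lt_of_le (Finset.mem_range.mp hi) hkl)
    omega
  rw [← gauss_ratio q hq2 k ℓ (ℓ + m) hk hkl hln]
  rw [le_div_iff₀ (by exact_mod_cast hPl)]
  exact_mod_cast hmain
end

section
/- The bound [ℓ+m choose k]_q / [ℓ choose k]_q is always at most [m+k choose k]_q; i.e., the Wang–Xing–Safavi-Naini bound is at least as tight as the Singleton-type bound, for all 1 ≤ k ≤ ℓ ≤ m and prime powers q. -/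
lemma key_ratio (q : ℚ) (hq : 2 ≤ q) (a b m : ℕ) (hb : 1 ≤ b) (hba : b ≤ a) :
    (q ^ (a + m) - 1) / (q ^ a - 1) ≤ (q ^ (b + m) - 1) / (q ^ b - 1) := by
  have h1 : (1:ℚ) ≤ q := by linarith
  have hqb : (2:ℚ) ≤ q ^ b := le_trans hq (le_self_pow₀ (by linarith) (by omega))
  have hqa : (2:ℚ) ≤ q ^ a := le_trans hq (le_self_pow₀ (by linarith) (by omega))
  have hab : q ^ b ≤ q ^ a := pow_le_pow_right₀ h1 hba
  have hm : (1:ℚ) ≤ q ^ m := one_le_pow₀ h1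
  have hb0 : (0:ℚ) < q ^ b - 1 := by linarith
  have ha0 : (0:ℚ) < q ^ a - 1 := by linarith
  rw [div_le_div_iff₀ ha0 hb0, pow_add, pow_add]
  nlinarith [mul_nonneg (by linarith : (0:ℚ) ≤ q ^ m - 1) (by linarith : (0:ℚ) ≤ q ^ a - q ^ b)]

/-- The Wang–Xing–Safavi-Naini bound is always at least as tight as the Singleton-type
bound: `[ℓ+m choose k]_q / [ℓ choose k]_q ≤ [m+k choose k]_q`. -/
theorem stmt9 (q k ℓ m : ℕ) (hq : IsPrimePow q) (hk : 1 ≤ k) (hkl : k ≤ ℓ)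
    (hlm : ℓ ≤ m) :
    gaussBinom (q : ℚ) (ℓ + m) k / gaussBinom (q : ℚ) ℓ k ≤
      gaussBinom (q : ℚ) (m + k) k := by
  have hq2 : (2:ℚ) ≤ (q:ℚ) := by exact_mod_cast hq.two_le
  have h1 : (1:ℚ) ≤ (q:ℚ) := by linarith
  unfold gaussBinom
  rw [← Finset.prod_div_distrib]
  apply Finset.prod_le_prod
  · intro i hi
    rw [Finset.mem_range] at hi
    have hki : 1 ≤ k - i := by omega
    have hqk : (2:ℚ) ≤ (q:ℚ) ^ (k - i) := le_trans hq2 (le_self_pow₀ (by linarith) (by omega))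
    have hql : (2:ℚ) ≤ (q:ℚ) ^ (ℓ - i) := le_trans hq2 (le_self_pow₀ (by linarith) (by omega))
    have hqlm : (2:ℚ) ≤ (q:ℚ) ^ (ℓ + m - i) := le_trans hq2 (le_self_pow₀ (by linarith) (by omega))
    apply div_nonneg (div_nonneg (by linarith) (by linarith)) (div_nonneg (by linarith) (by linarith))
  · intro i hi
    rw [Finset.mem_range] at hi
    have hki : 1 ≤ k - i := by omega
    have hqk : (0:ℚ) < (q:ℚ) ^ (k - i) - 1 := by
      have : (2:ℚ) ≤ (q:ℚ) ^ (k - i) := le_trans hq2 (le_self_pow₀ (by linarith) (by omega))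
      linarith
    have hql : (0:ℚ) < (q:ℚ) ^ (ℓ - i) - 1 := by
      have : (2:ℚ) ≤ (q:ℚ) ^ (ℓ - i) := le_trans hq2 (le_self_pow₀ (by linarith) (by omega))
      linarith
    rw [show ((q:ℚ) ^ (ℓ + m - i) - 1) / ((q:ℚ) ^ (k - i) - 1) / (((q:ℚ) ^ (ℓ - i) - 1) / ((q:ℚ) ^ (k - i) - 1)) = ((q:ℚ) ^ (ℓ + m - i) - 1) / ((q:ℚ) ^ (ℓ - i) - 1) from by field_simp]
    have e1 : ℓ + m - i = (ℓ - i) + m := by omega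
    have e2 : m + k - i = (k - i) + m := by omega
    rw [e1, e2]
    exact key_ratio _ hq2 (ℓ - i) (k - i) m (by omega) (by omega)
end

section
/- Suppose V = {0^ℓ} ⊕ V' with V' ⊆ F = F_{q^m}, dim V = ℓ, and U ⊆ W = F_q^ℓ × F satisfies dim(U) = ℓ - κ + γ and dim(U ∩ V) = ℓ - κ. Then the projections U' = U|_F and V' satisfy d(U', V') ≤ κ + γ. -/
/-!
Projecting onto the `F`-component does not increase dimension, so `dim U' ≤ ℓ - κ + γ`; it is
injective on `U ∩ V ⊆ {0} × V'` and maps it into `U' ∩ V'`, so `dim (U' ∩ V') ≥ ℓ - κ`.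
Since `dim V' = dim V = ℓ`, the distance is at most `(ℓ - κ + γ) + ℓ - 2 (ℓ - κ) = κ + γ`.
-/

namespace Submodule

theorem finrank_bot_prod {R M N : Type*} [Semiring R] [AddCommMonoid M] [Module R M]
    [AddCommMonoid N] [Module R N] (W : Submodule R N) :
    Module.finrank R ↥((⊥ : Submodule R M).prod W) = Module.finrank R W := by
  rw [← map_inr]
  exact (equivMapOfInjective _ LinearMap.inr_injective W).finrank_eq.symm

theorem finrank_inf_bot_prod_le_finrank_map_snd_inf {K M N : Type*} [DivisionRing K]
    [AddCommGroup M] [Module K M] [AddCommGroup N] [Module K N] [FiniteDimensional K N]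
    (U : Submodule K (M × N)) (W : Submodule K N) :
    Module.finrank K ↥(U ⊓ (⊥ : Submodule K M).prod W)
      ≤ Module.finrank K ↥(U.map (LinearMap.snd K M N) ⊓ W) := by
  set X := U.map (LinearMap.snd K M N) ⊓ W
  have hle : U ⊓ (⊥ : Submodule K M).prod W ≤ X.map (LinearMap.inr K M N) := by
    rw [map_inr]
    exact fun x ⟨hxU, hx₁, hx₂⟩ => ⟨hx₁, ⟨x, hxU, rfl⟩, hx₂⟩
  calc Module.finrank K ↥(U ⊓ (⊥ : Submodule K M).prod W)
      ≤ Module.finrank K ↥(X.map (LinearMap.inr K M N)) := finrank_mono hle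
    _ = Module.finrank K X := by rw [map_inr, finrank_bot_prod]

end Submodule

theorem stmt11_general (K L : Type*) [Field K] [Field L] [Algebra K L]
    [FiniteDimensional K L] (ℓ κ γ : ℕ)
    (V' : Submodule K L) (U : Submodule K ((Fin ℓ → K) × L))
    (hV : Module.finrank K
      ↥(Submodule.prod (⊥ : Submodule K (Fin ℓ → K)) V') = ℓ)
    (hU : Module.finrank K ↥U = ℓ - κ + γ)
    (hUV : Module.finrank K
      ↥(U ⊓ Submodule.prod (⊥ : Submodule K (Fin ℓ → K)) V') = ℓ - κ) :
    (Module.finrank K ↥(U.map (LinearMap.snd K (Fin ℓ → K) L)) : ℤ)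
      + (Module.finrank K ↥V' : ℤ)
      - 2 * (Module.finrank K ↥(U.map (LinearMap.snd K (Fin ℓ → K) L) ⊓ V') : ℤ)
      ≤ (κ : ℤ) + (γ : ℤ) := by
  have hV' : Module.finrank K V' = ℓ := Submodule.finrank_bot_prod (M := Fin ℓ → K) V' ▸ hV
  have hproj : Module.finrank K ↥(U.map (LinearMap.snd K (Fin ℓ → K) L)) ≤ ℓ - κ + γ :=
    hU ▸ Submodule.finrank_map_le _ U
  have hinter : ℓ - κ ≤ Module.finrank K ↥(U.map (LinearMap.snd K (Fin ℓ → K) L) ⊓ V') :=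
    hUV ▸ Submodule.finrank_inf_bot_prod_le_finrank_map_snd_inf U V'
  omega

/-- If `V = {0^ℓ} ⊕ V'` has dimension `ℓ`, `dim U = ℓ - κ + γ` and
`dim (U ∩ V) = ℓ - κ`, then the projections satisfy `d(U', V') ≤ κ + γ`. -/
theorem stmt11 (K L : Type*) [Field K] [Fintype K] [Field L] [Algebra K L]
    [FiniteDimensional K L] (ℓ κ γ : ℕ) (hκ : κ ≤ ℓ)
    (V' : Submodule K L) (U : Submodule K ((Fin ℓ → K) × L))
    (hV : Module.finrank K
      ↥(Submodule.prod (⊥ : Submodule K (Fin ℓ → K)) V') = ℓ)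
    (hU : Module.finrank K ↥U = ℓ - κ + γ)
    (hUV : Module.finrank K
      ↥(U ⊓ Submodule.prod (⊥ : Submodule K (Fin ℓ → K)) V') = ℓ - κ) :
    (Module.finrank K ↥(U.map (LinearMap.snd K (Fin ℓ → K) L)) : ℤ)
      + (Module.finrank K ↥V' : ℤ)
      - 2 * (Module.finrank K ↥(U.map (LinearMap.snd K (Fin ℓ → K) L) ⊓ V') : ℤ)
      ≤ (κ : ℤ) + (γ : ℤ) :=
  stmt11_general K L ℓ κ γ V' U hV hU hUV
end

section
/- For q ≥ 2, k ≥ 1, ℓ ≥ k, and m ≥ ℓ, the quantity N(ℓ+m, ℓ, k) = (q^{(ℓ+m)k} - q^{(r+ℓ)k})/(q^{ℓk} - 1) with r = m mod ℓ satisfies N(ℓ+m, ℓ, k) > q^{mk} whenever m ≥ 2ℓ; i.e., the recursive code is strictly larger than the Kötter–Kschischang code. -/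
/-- Whenever `m ≥ 2ℓ`, the recursive code is strictly larger than the
Kötter–Kschischang code: `N(ℓ+m, ℓ, k) = (q^{(ℓ+m)k} - q^{(r+ℓ)k})/(q^{ℓk} - 1) > q^{mk}`
where `r = m mod ℓ`. -/
theorem stmt15 (q k ℓ m : ℕ) (hq : 2 ≤ q) (hk : 1 ≤ k) (hkl : k ≤ ℓ)
    (hm : 2 * ℓ ≤ m) :
    q ^ (m * k) <
      (q ^ ((ℓ + m) * k) - q ^ ((m % ℓ + ℓ) * k)) / (q ^ (ℓ * k) - 1) := by
  set r := m % ℓ with hrdef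
  have hl : 1 ≤ ℓ := hk.trans hkl
  have hrlt : r < ℓ := Nat.mod_lt _ (by omega)
  set A := q ^ (m * k) with hA
  set T := q ^ (ℓ * k) with hT
  set B := q ^ ((r + ℓ) * k) with hB
  have hT2 : 2 ≤ T := by
    calc 2 = 2 ^ 1 := rfl
    _ ≤ q ^ (ℓ * k) := Nat.pow_le_pow_left hq 1 |>.trans
        (Nat.pow_le_pow_right (by omega) (by nlinarith))
  -- B * q ≤ A
  have h1 : (r + ℓ) * k + 1 ≤ m * k := by
    have h' : (r + ℓ + 1) * k ≤ m * k := Nat.mul_le_mul_right k (by omega)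
    nlinarith
  have hx : B * q ≤ A := by
    rw [hB, ← pow_succ]
    exact Nat.pow_le_pow_right (by omega) h1
  have h2 : ℓ * k + 1 ≤ m * k := by
    have h' : (ℓ + 1) * k ≤ m * k := Nat.mul_le_mul_right k (by omega)
    nlinarith
  have hy : T * q ≤ A := by
    rw [hT, ← pow_succ]
    exact Nat.pow_le_pow_right (by omega) h2
  have hx2 : B * 2 ≤ B * q := Nat.mul_le_mul_left B hq
  have hy2 : T * 2 ≤ T * q := Nat.mul_le_mul_left T hq
  have hBT : B + T ≤ A := by omega
  have hmul : q ^ ((ℓ + m) * k) = T * A := by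
    rw [hT, hA, ← pow_add]
    ring_nf
  rw [hmul]
  have hBle : B ≤ T * A := by nlinarith
  have key : (A + 1) * (T - 1) ≤ T * A - B := by
    zify [show 1 ≤ T by omega, hBle]
    nlinarith
  have := (Nat.le_div_iff_mul_le (show 0 < T - 1 by omega)).mpr key
  omega
end
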